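/- Let G(x,t) = (4πt)^{−1/2} exp(−x²/(4t)) be the heat kernel and for x, y ≥ 0, t < T define K_T(x,y,t) = G(x−y, (1+y)^{1/3}(T−t)) − G(x+y, (1+y)^{1/3}(T−t)). Then there exist universal constants η₁, η₂ > 0 such that: (i) K_T(x,y,t) ≥ η₁ G(x−y, (1+y)^{1/3}(T−t)) whenever |x−y| ≤ x/2, x ≥ √(T−t), and T−t ≤ 1; (ii) ∫_{|x−y|<x/2} G(x−y, (1+y)^{1/3}(T−t)) dy ≥ η₂ for x ≥ √(T−t), T−t ≤ 1. Consequently v(x,t) = ∫₀^∞ K_T(x,y,t) dy ≥ η₁η₂ for x ≥ √(T−t), T−t ≤ 1. -/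

import Mathlib

/-! The image term is the direct term times `exp (-x y / s)`, so it is at most `e^{-1/4}` times
the direct term as soon as the time `s = (1 + y)^{1/3} (T - t)` is at most `4 x y`; on
`|x - y| ≤ x / 2` this follows from `T - t ≤ min 1 x²` and Bernoulli's bound
`(1 + y)^{1/3} ≤ 1 + y / 3`. For the mass bound, the time stays within a factor 2 of
`s₀ = (1 + x)^{1/3} (T - t)` on the window, and `s₀ ≤ (3 x / 2)²`, so the window contains
`|x - y| < √s₀ / 3`, where the Gaussian is at least `e^{-1/18} / √(8 π s₀)`. The last claim
combines the two, the kernel being nonnegative and integrable thanks to Gaussian decay in `y`. -/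

open MeasureTheory Set

noncomputable def heatG (x t : ℝ) : ℝ :=
  (Real.sqrt (4 * Real.pi * t))⁻¹ * Real.exp (-(x^2) / (4*t))

noncomputable def imgK (T x y t : ℝ) : ℝ :=
  heatG (x - y) ((1+y) ^ ((1:ℝ)/3) * (T - t))
    - heatG (x + y) ((1+y) ^ ((1:ℝ)/3) * (T - t))

open Real

lemma heatG_nonneg (x t : ℝ) : 0 ≤ heatG x t :=
  mul_nonneg (inv_nonneg.mpr (sqrt_nonneg _)) (exp_pos _).le

lemma heatG_le_heatG_of_sq_le {x x' t : ℝ} (ht : 0 < t) (h : x ^ 2 ≤ x' ^ 2) :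
    heatG x' t ≤ heatG x t := by
  unfold heatG
  gcongr

lemma heatG_add_eq_mul_exp (x y : ℝ) {s : ℝ} (hs : s ≠ 0) :
    heatG (x + y) s = heatG (x - y) s * exp (-(x * y) / s) := by
  have hexp : exp (-(x + y) ^ 2 / (4 * s)) =
      exp (-(x - y) ^ 2 / (4 * s)) * exp (-(x * y) / s) := by
    rw [← exp_add]; congr 1; field_simp; ring
  unfold heatG
  rw [neg_div, neg_div, ← neg_div, ← neg_div, hexp]
  ring

lemma heatG_add_le_of_le_four_mul {x y s : ℝ} (hs : 0 < s) (h : s ≤ 4 * x * y) :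
    heatG (x + y) s ≤ 4 / 5 * heatG (x - y) s := by
  have hexp : exp (-(x * y) / s) ≤ 4 / 5 :=
    calc exp (-(x * y) / s) ≤ exp (-(1 / 4)) := by
          gcongr
          rw [neg_div, neg_le_neg_iff, le_div_iff₀ hs]
          linarith
      _ = (exp (1 / 4))⁻¹ := exp_neg _
      _ ≤ (5 / 4)⁻¹ := by gcongr; linarith [add_one_le_exp (1 / 4 : ℝ)]
      _ = 4 / 5 := by norm_num
  rw [heatG_add_eq_mul_exp x y hs.ne', mul_comm (4 / 5)]
  exact mul_le_mul_of_nonneg_left hexp (heatG_nonneg _ _)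

lemma heatG_le_of_le_of_le {z τ s S : ℝ} (hτ : 0 < τ) (hτs : τ ≤ s) (hsS : s ≤ S) :
    heatG z s ≤ (sqrt (4 * π * τ))⁻¹ * exp (-z ^ 2 / (4 * S)) := by
  unfold heatG
  have hs : 0 < s := hτ.trans_le hτs
  gcongr ?_ * exp ?_
  · gcongr
  · rw [neg_div, neg_div, neg_le_neg_iff]
    gcongr

lemma le_heatG_of_sq_le {z s s₀ : ℝ} (hs₀ : 0 < s₀) (hlo : s₀ / 2 ≤ s) (hhi : s ≤ 2 * s₀)
    (hz : z ^ 2 ≤ s₀ / 9) :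
    (sqrt (8 * π * s₀))⁻¹ * exp (-(1 / 18)) ≤ heatG z s := by
  have hs : 0 < s := by linarith
  unfold heatG
  gcongr ?_ * exp ?_
  · exact inv_anti₀ (by positivity) (sqrt_le_sqrt (by nlinarith [pi_pos]))
  · rw [neg_div, neg_le_neg_iff, div_le_iff₀ (by positivity)]
    nlinarith

lemma ContinuousOn.heatG {f g : ℝ → ℝ} {S : Set ℝ} (hf : ContinuousOn f S)
    (hg : ContinuousOn g S) (hpos : ∀ y ∈ S, 0 < g y) :
    ContinuousOn (fun y => heatG (f y) (g y)) S := by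
  have hg4 : ∀ y ∈ S, 0 < 4 * π * g y := fun y hy => by have := hpos y hy; positivity
  refine ContinuousOn.mul ?_ (continuous_exp.comp_continuousOn ?_)
  · exact ((continuousOn_const.mul hg).sqrt).inv₀ fun y hy => (sqrt_pos.mpr (hg4 y hy)).ne'
  · exact (hf.pow 2).neg.div (continuousOn_const.mul hg) fun y hy => by
      have := hpos y hy; positivity

lemma one_tenth_le_two_thirds_mul_exp_div_sqrt :
    (1 : ℝ) / 10 ≤ 2 / 3 * exp (-(1 / 18)) / sqrt (8 * π) := by
  have hsqrt : sqrt (8 * π) ≤ 6 := by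
    rw [sqrt_le_left (by norm_num)]
    nlinarith [pi_le_four]
  have hexp : (17 : ℝ) / 18 ≤ exp (-(1 / 18)) := by linarith [add_one_le_exp (-(1 / 18) : ℝ)]
  rw [le_div_iff₀ (by positivity)]
  nlinarith

lemma one_tenth_le_setIntegral_heatG {σ : ℝ → ℝ} {a b x s₀ : ℝ} (hs₀ : 0 < s₀)
    (hwin : Ioo (x - sqrt s₀ / 3) (x + sqrt s₀ / 3) ⊆ Ioo a b)
    (hσ : ∀ y ∈ Ioo a b, s₀ / 2 ≤ σ y ∧ σ y ≤ 2 * s₀)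
    (hint : IntegrableOn (fun y => heatG (x - y) (σ y)) (Ioo a b)) :
    1 / 10 ≤ ∫ y in Ioo a b, heatG (x - y) (σ y) := by
  set w := sqrt s₀ / 3 with hw_def
  set c := (sqrt (8 * π * s₀))⁻¹ * exp (-(1 / 18)) with hc_def
  have hw : 0 < w := by positivity
  have hw2 : w ^ 2 = s₀ / 9 := by rw [div_pow, sq_sqrt hs₀.le]; norm_num
  have hc : 1 / 10 ≤ c * (2 * w) := by
    have hsqrt : sqrt (8 * π * s₀) = sqrt (8 * π) * sqrt s₀ := sqrt_mul (by positivity) _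
    have hsqrt₀ : 0 < sqrt s₀ := sqrt_pos.mpr hs₀
    have hcw : c * (2 * w) = 2 / 3 * exp (-(1 / 18)) / sqrt (8 * π) := by
      rw [hc_def, hw_def, hsqrt]
      field_simp
    exact hcw ▸ one_tenth_le_two_thirds_mul_exp_div_sqrt
  have hwindow : c * (2 * w) ≤ ∫ y in Ioo (x - w) (x + w), heatG (x - y) (σ y) := by
    have hlow : ∀ y ∈ Ioo (x - w) (x + w), c ≤ heatG (x - y) (σ y) := fun y hy =>
      le_heatG_of_sq_le hs₀ (hσ y (hwin hy)).1 (hσ y (hwin hy)).2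
        (hw2 ▸ sq_le_sq' (by linarith [hy.2]) (by linarith [hy.1]))
    have h := setIntegral_ge_of_const_le_real measurableSet_Ioo (by simp) hlow
      (hint.mono_set hwin)
    rwa [volume_real_Ioo_of_le (by linarith), show x + w - (x - w) = 2 * w by ring] at h
  have hnonneg : 0 ≤ᵐ[volume.restrict (Ioo a b)] fun y => heatG (x - y) (σ y) :=
    ae_of_all _ fun y => heatG_nonneg _ _
  calc 1 / 10 ≤ c * (2 * w) := hc
    _ ≤ ∫ y in Ioo (x - w) (x + w), heatG (x - y) (σ y) := hwindow
    _ ≤ ∫ y in Ioo a b, heatG (x - y) (σ y) :=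
        setIntegral_mono_set hint hnonneg hwin.eventuallyLE

lemma rpow_one_third_le_two_mul {a b : ℝ} (ha : 0 ≤ a) (hb : 0 ≤ b) (h : a ≤ 8 * b) :
    a ^ ((1 : ℝ) / 3) ≤ 2 * b ^ ((1 : ℝ) / 3) := by
  have h8 : (8 : ℝ) ^ ((1 : ℝ) / 3) = 2 := by
    rw [show (8 : ℝ) = 2 ^ (3 : ℕ) by norm_num, one_div, show (3 : ℝ) = ((3 : ℕ) : ℝ) by norm_num,
      pow_rpow_inv_natCast (by norm_num) (by norm_num)]
  calc a ^ ((1 : ℝ) / 3) ≤ (8 * b) ^ ((1 : ℝ) / 3) := rpow_le_rpow ha h (by norm_num)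
    _ = 2 * b ^ ((1 : ℝ) / 3) := by rw [mul_rpow (by norm_num) hb, h8]

lemma one_add_rpow_one_third_le {y : ℝ} (hy : -1 ≤ y) :
    (1 + y) ^ ((1 : ℝ) / 3) ≤ 1 + y / 3 := by
  have := rpow_one_add_le_one_add_mul_self hy (p := 1 / 3) (by norm_num) (by norm_num)
  linarith

lemma one_le_one_add_rpow_one_third {y : ℝ} (hy : 0 ≤ y) : 1 ≤ (1 + y) ^ ((1 : ℝ) / 3) :=
  one_le_rpow (by linarith) (by norm_num)

lemma continuousOn_heatG_diffusion {f : ℝ → ℝ} {τ : ℝ} (hf : Continuous f) (hτ : 0 < τ) :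
    ContinuousOn (fun y => heatG (f y) ((1 + y) ^ ((1 : ℝ) / 3) * τ)) (Ioi (-1)) := by
  have hlin : Continuous fun y : ℝ => 1 + y := by fun_prop
  refine hf.continuousOn.heatG (ContinuousOn.mul ?_ continuousOn_const) fun y hy => ?_
  · exact hlin.continuousOn.rpow_const fun y hy => Or.inl (by
      have : -1 < y := hy; linarith)
  · have : -1 < y := hy
    exact mul_pos (rpow_pos_of_pos (by linarith) _) hτ

lemma heatG_sub_diffusion_le_exp {x y τ : ℝ} (hτ : 0 < τ) (hx : 0 ≤ x) (hy : 2 * x + 1 < y) :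
    heatG (x - y) ((1 + y) ^ ((1 : ℝ) / 3) * τ) ≤
      (sqrt (4 * π * τ))⁻¹ * exp (-(1 / (32 * τ)) * y) := by
  have hy₀ : 0 < y := by linarith
  have hr := one_add_rpow_one_third_le (by linarith : -1 ≤ y)
  have hr₁ := one_le_one_add_rpow_one_third (by linarith : 0 ≤ y)
  calc heatG (x - y) ((1 + y) ^ ((1 : ℝ) / 3) * τ)
      ≤ (sqrt (4 * π * τ))⁻¹ * exp (-(x - y) ^ 2 / (4 * (2 * y * τ))) :=
        heatG_le_of_le_of_le hτ (by nlinarith) (by nlinarith)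
    _ ≤ (sqrt (4 * π * τ))⁻¹ * exp (-(1 / (32 * τ)) * y) := by
        gcongr
        rw [neg_div, neg_mul, neg_le_neg_iff, div_mul_eq_mul_div, one_mul,
          div_le_div_iff₀ (by positivity) (by positivity)]
        have hyx : y / 2 ≤ y - x := by linarith
        nlinarith [mul_le_mul hyx hyx (by positivity) (by linarith)]

lemma integrableOn_heatG_sub_diffusion {x τ : ℝ} (hτ : 0 < τ) (hx : 0 ≤ x) :
    IntegrableOn (fun y => heatG (x - y) ((1 + y) ^ ((1 : ℝ) / 3) * τ)) (Ioi 0) := by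
  have hcont := continuousOn_heatG_diffusion (f := (x - ·)) (by fun_prop) hτ
  have hM : (0 : ℝ) ≤ 2 * x + 1 := by linarith
  rw [← Ioc_union_Ioi_eq_Ioi hM]
  refine IntegrableOn.union ?_ ?_
  · refine ((hcont.mono fun y hy => ?_).integrableOn_Icc).mono_set Ioc_subset_Icc_self
    exact lt_of_lt_of_le (by norm_num) hy.1
  · have hexp := exp_neg_integrableOn_Ioi (2 * x + 1) (by positivity : 0 < 1 / (32 * τ))
    refine Integrable.mono' (hexp.const_mul (sqrt (4 * π * τ))⁻¹)
      ((hcont.mono fun y hy => ?_).aestronglyMeasurable measurableSet_Ioi)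
      (ae_restrict_of_forall_mem measurableSet_Ioi fun y hy => ?_)
    · exact (show (-1 : ℝ) < 2 * x + 1 by linarith).trans hy
    · rw [norm_of_nonneg (heatG_nonneg _ _)]
      exact heatG_sub_diffusion_le_exp hτ hx hy

lemma diffusion_le_four_mul {x y τ : ℝ} (hτ : 0 ≤ τ) (hτx2 : τ ≤ x ^ 2) (hτx : τ ≤ x)
    (hy : x / 2 ≤ y) : (1 + y) ^ ((1 : ℝ) / 3) * τ ≤ 4 * x * y := by
  have hr := one_add_rpow_one_third_le (by linarith : -1 ≤ y)
  nlinarith [mul_le_mul_of_nonneg_right hr hτ,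
    mul_le_mul_of_nonneg_right hτx (by linarith : 0 ≤ y)]

lemma one_tenth_le_integral_heatG_diffusion {x τ : ℝ} (hτ : 0 < τ) (hτx2 : τ ≤ x ^ 2)
    (hτx : τ ≤ x) :
    1 / 10 ≤
      ∫ y in Ioo (x / 2) (3 * x / 2), heatG (x - y) ((1 + y) ^ ((1 : ℝ) / 3) * τ) := by
  have hx : 0 < x := hτ.trans_le hτx
  set s₀ := (1 + x) ^ ((1 : ℝ) / 3) * τ
  have hs₀ : 0 < s₀ := mul_pos (rpow_pos_of_pos (by linarith) _) hτ
  have hs₀x : s₀ ≤ (3 / 2 * x) ^ 2 := by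
    have hr := one_add_rpow_one_third_le (by linarith : -1 ≤ x)
    nlinarith [mul_le_mul_of_nonneg_right hr hτ.le]
  have hsqrt : sqrt s₀ ≤ 3 / 2 * x := (sqrt_le_left (by positivity)).mpr hs₀x
  refine one_tenth_le_setIntegral_heatG hs₀ (fun y hy => ⟨?_, ?_⟩) (fun y hy => ⟨?_, ?_⟩) ?_
  · linarith [hy.1]
  · linarith [hy.2]
  · have := rpow_one_third_le_two_mul (by linarith) (by linarith [hy.1])
      (by linarith [hy.1] : 1 + x ≤ 8 * (1 + y))
    nlinarith
  · have := rpow_one_third_le_two_mul (by linarith [hy.1]) (by linarith)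
      (by linarith [hy.2] : 1 + y ≤ 8 * (1 + x))
    nlinarith
  · refine ((continuousOn_heatG_diffusion (f := (x - ·)) (by fun_prop) hτ).mono
      fun y hy => ?_).integrableOn_Icc.mono_set Ioo_subset_Icc_self
    exact lt_of_lt_of_le (by linarith) hy.1

lemma imgK_le_heatG_sub (T x y t : ℝ) :
    imgK T x y t ≤ heatG (x - y) ((1 + y) ^ ((1 : ℝ) / 3) * (T - t)) :=
  sub_le_self _ (heatG_nonneg _ _)

lemma imgK_nonneg {T x y t : ℝ} (hτ : 0 < T - t) (hx : 0 ≤ x) (hy : 0 ≤ y) :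
    0 ≤ imgK T x y t :=
  sub_nonneg.mpr (heatG_le_heatG_of_sq_le (mul_pos (rpow_pos_of_pos (by linarith) _) hτ)
    (by nlinarith))

lemma integrableOn_imgK {T x t : ℝ} (hτ : 0 < T - t) (hx : 0 ≤ x) :
    IntegrableOn (fun y => imgK T x y t) (Ioi 0) := by
  have hsub := continuousOn_heatG_diffusion (f := (x - ·)) (by fun_prop) hτ
  have hadd := continuousOn_heatG_diffusion (f := (x + ·)) (by fun_prop) hτ
  have hmeas : AEStronglyMeasurable (fun y => imgK T x y t) (volume.restrict (Ioi 0)) :=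
    ((hsub.sub hadd).mono (Ioi_subset_Ioi (by norm_num))).aestronglyMeasurable measurableSet_Ioi
  refine (integrableOn_heatG_sub_diffusion hτ hx).mono' hmeas
    (ae_restrict_of_forall_mem measurableSet_Ioi fun y hy => ?_)
  rw [norm_of_nonneg (imgK_nonneg hτ hx (le_of_lt hy))]
  exact imgK_le_heatG_sub T x y t

lemma one_fifth_mul_heatG_le_imgK {T x y t : ℝ} (hτ : 0 < T - t) (hτx2 : T - t ≤ x ^ 2)
    (hτx : T - t ≤ x) (hxy : |x - y| ≤ x / 2) :
    1 / 5 * heatG (x - y) ((1 + y) ^ ((1 : ℝ) / 3) * (T - t)) ≤ imgK T x y t := by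
  have hy : x / 2 ≤ y := by linarith [(abs_le.mp hxy).2]
  have hs : 0 < (1 + y) ^ ((1 : ℝ) / 3) * (T - t) :=
    mul_pos (rpow_pos_of_pos (by linarith) _) hτ
  have := heatG_add_le_of_le_four_mul hs (diffusion_le_four_mul hτ.le hτx2 hτx hy)
  unfold imgK
  linarith

theorem stmt_17 :
    ∃ η₁ > (0:ℝ), ∃ η₂ > (0:ℝ),
      ∀ T t x : ℝ, 0 < T - t → T - t ≤ 1 → Real.sqrt (T - t) ≤ x →
        (∀ y : ℝ, 0 ≤ y → |x - y| ≤ x/2 →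
          η₁ * heatG (x - y) ((1+y) ^ ((1:ℝ)/3) * (T - t)) ≤ imgK T x y t) ∧
        η₂ ≤ (∫ y in Ioo (x/2) (3*x/2), heatG (x - y) ((1+y) ^ ((1:ℝ)/3) * (T - t))) ∧
        η₁ * η₂ ≤ ∫ y in Ioi (0:ℝ), imgK T x y t := by
  refine ⟨1 / 5, by norm_num, 1 / 10, by norm_num, fun T t x hτ hτ1 hx => ?_⟩
  obtain ⟨hx₀, hτx2⟩ := sqrt_le_iff.mp hx
  have hτx : T - t ≤ x := by rcases le_total x 1 with h | h <;> nlinarith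
  have hx_pos : 0 < x := hτ.trans_le hτx
  have hpart1 : ∀ y, |x - y| ≤ x / 2 →
      1 / 5 * heatG (x - y) ((1 + y) ^ ((1 : ℝ) / 3) * (T - t)) ≤ imgK T x y t :=
    fun y => one_fifth_mul_heatG_le_imgK hτ hτx2 hτx
  have hpart2 := one_tenth_le_integral_heatG_diffusion hτ hτx2 hτx
  refine ⟨fun y _ => hpart1 y, hpart2, ?_⟩
  have hwindow : Ioo (x / 2) (3 * x / 2) ⊆ Ioi 0 := fun y hy =>
    lt_trans (by positivity) hy.1
  have hint := integrableOn_imgK hτ hx₀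
  have hGint := ((integrableOn_heatG_sub_diffusion hτ hx₀).mono_set hwindow).const_mul (1 / 5)
  calc 1 / 5 * (1 / 10)
      ≤ ∫ y in Ioo (x / 2) (3 * x / 2),
          1 / 5 * heatG (x - y) ((1 + y) ^ ((1 : ℝ) / 3) * (T - t)) := by
        rw [integral_const_mul]
        gcongr
    _ ≤ ∫ y in Ioo (x / 2) (3 * x / 2), imgK T x y t :=
        setIntegral_mono_on hGint (hint.mono_set hwindow) measurableSet_Ioo fun y hy =>
          hpart1 y (abs_le.mpr ⟨by linarith [hy.2], by linarith [hy.1]⟩)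
    _ ≤ ∫ y in Ioi 0, imgK T x y t :=
        setIntegral_mono_set hint (ae_restrict_of_forall_mem measurableSet_Ioi fun y hy =>
          imgK_nonneg hτ hx₀ (le_of_lt hy)) hwindow.eventuallyLE
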